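/- Let g be the Lie algebra A_2 ⊕ A_2. Define r : g* → g by r(ε1) = e2, r(ε2) = −e1, r(ε3) = e4, r(ε4) = −e3 (the 2-vector e1∧e2 + e3∧e4). Then r is a bijective skew-symmetric solution of the CYBE, and for all real numbers n1, n2, n3, the endomorphism n defined by n(e1) = n1·e1 − n2·e4, n(e2) = n1·e2, n(e3) = n2·e2 + n3·e3, n(e4) = n3·e4 makes (r, n) an r-n structure on g. -/
import Mathlib


noncomputable section

open Module

variable {g : Type*} [LieRing g] [LieAlgebra ℝ g]

/-- The coadjoint operator: `(coad X α) Y = -α ⁅X, Y⁆`. -/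
def coad (X : g) : Module.Dual ℝ g →ₗ[ℝ] Module.Dual ℝ g :=
  -(LieAlgebra.ad ℝ g X).dualMap

/-- A linear map `r : g* → g` is skew-symmetric if `α (r β) = -β (r α)`. -/
def IsSkew (r : Module.Dual ℝ g →ₗ[ℝ] g) : Prop :=
  ∀ α β : Module.Dual ℝ g, α (r β) = -β (r α)

/-- The Sklyanin bracket on `g*` defined by `r`. -/
def sklyanin (r : Module.Dual ℝ g →ₗ[ℝ] g) (α β : Module.Dual ℝ g) : Module.Dual ℝ g :=
  coad (r α) β - coad (r β) α

/-- `r` is a solution of the classical Yang-Baxter equation. -/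
def IsCYBE (r : Module.Dual ℝ g →ₗ[ℝ] g) : Prop :=
  ∀ α β : Module.Dual ℝ g, r (sklyanin r α β) = ⁅r α, r β⁆

/-- `n : g → g` is a Nijenhuis operator. -/
def IsNijenhuis (n : g →ₗ[ℝ] g) : Prop :=
  ∀ X Y : g, ⁅n X, n Y⁆ - n ⁅n X, Y⁆ - n ⁅X, n Y⁆ + n (n ⁅X, Y⁆) = 0

/-- `(r, n)` is an r-n structure on `g`. -/
def IsRN (r : Module.Dual ℝ g →ₗ[ℝ] g) (n : g →ₗ[ℝ] g) : Prop :=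
  IsSkew r ∧ IsCYBE r ∧ IsNijenhuis n ∧
    (∀ α : Module.Dual ℝ g, n (r α) = r (n.dualMap α)) ∧
    ∀ α β : Module.Dual ℝ g,
      coad (r α) (n.dualMap β) - coad (r β) (n.dualMap α)
        - n.dualMap (coad (r α) β) + n.dualMap (coad (r β) α) = 0

/-- The Nijenhuis concomitant of two endomorphisms. -/
def nijConcomitant (n' n : g →ₗ[ℝ] g) (X Y : g) : g :=
  ⁅n' X, n Y⁆ + ⁅n X, n' Y⁆ - n' ⁅n X, Y⁆ - n' ⁅X, n Y⁆ - n ⁅n' X, Y⁆ - n ⁅X, n' Y⁆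
    + n' (n ⁅X, Y⁆) + n (n' ⁅X, Y⁆)

/-- The underlying space of the Lie algebra `A2A2`: `ℝ⁴`. -/
def A2A2 : Type := Fin 4 → ℝ

instance : AddCommGroup A2A2 := inferInstanceAs (AddCommGroup (Fin 4 → ℝ))
instance : Module ℝ A2A2 := inferInstanceAs (Module ℝ (Fin 4 → ℝ))

namespace A2A2

@[simp] theorem add_apply (x y : A2A2) (i : Fin 4) : (x + y) i = x i + y i := rfl
@[simp] theorem smul_apply (c : ℝ) (x : A2A2) (i : Fin 4) : (c • x) i = c * x i := rfl
@[simp] theorem neg_apply (x : A2A2) (i : Fin 4) : (-x) i = -(x i) := rfl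
@[simp] theorem sub_apply (x y : A2A2) (i : Fin 4) : (x - y) i = x i - y i := rfl
@[simp] theorem zero_apply (i : Fin 4) : (0 : A2A2) i = 0 := rfl

/-- The bracket of `A2A2`. -/
def br (x y : A2A2) : A2A2 := fun i =>
  if i = 0 then 0
  else if i = 1 then x 0 * y 1 - x 1 * y 0
  else if i = 2 then 0
  else x 2 * y 3 - x 3 * y 2

@[simp] theorem br_apply (x y : A2A2) (i : Fin 4) :
    br x y i = if i = 0 then 0
      else if i = 1 then x 0 * y 1 - x 1 * y 0
      else if i = 2 then 0
      else x 2 * y 3 - x 3 * y 2 := rfl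

instance : LieRing A2A2 where
  bracket := br
  add_lie x y z := by funext i; show br (x + y) z i = (br x z + br y z) i; simp; split_ifs <;> ring
  lie_add x y z := by funext i; show br x (y + z) i = (br x y + br x z) i; simp; split_ifs <;> ring
  lie_self x := by funext i; show br x x i = (0 : A2A2) i; simp; split_ifs <;> intros <;> (first | trivial | ring)
  leibniz_lie x y z := by
    funext i; show br x (br y z) i = (br (br x y) z + br y (br x z)) i
    simp; split_ifs <;> ring

instance : LieAlgebra ℝ A2A2 where
  lie_smul c x y := by
    funext i; show br x (c • y) i = (c • br x y) i; simp; split_ifs <;> ring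

/-- Basis vectors `e1, e2, e3, e4` (zero-indexed). -/
def e (i : Fin 4) : A2A2 := fun j => if j = i then 1 else 0

/-- Dual basis `ε1, ε2, ε3, ε4` (zero-indexed). -/
def eps (i : Fin 4) : Module.Dual ℝ A2A2 where
  toFun x := x i
  map_add' _ _ := rfl
  map_smul' _ _ := rfl

end A2A2

section Helpers
open A2A2

@[simp] lemma A2A2.lie_def (x y : A2A2) : ⁅x, y⁆ = br x y := rfl

@[simp] lemma A2A2.eps_apply (i : Fin 4) (x : A2A2) : eps i x = x i := rfl

@[simp] lemma A2A2.e_apply (i j : Fin 4) : e i j = if j = i then 1 else 0 := rfl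

lemma A2A2.coad_apply (X : A2A2) (α : Module.Dual ℝ A2A2) (Y : A2A2) :
    coad X α Y = -α ⁅X, Y⁆ := rfl

lemma A2A2.x_repr (x : A2A2) :
    x = x 0 • e 0 + x 1 • e 1 + x 2 • e 2 + x 3 • e 3 := by
  funext j; fin_cases j <;> simp [e]

lemma A2A2.dual_repr (α : Module.Dual ℝ A2A2) :
    α = α (e 0) • eps 0 + α (e 1) • eps 1 + α (e 2) • eps 2 + α (e 3) • eps 3 := by
  apply LinearMap.ext; intro x
  conv_lhs => rw [x_repr x]
  simp [smul_eq_mul]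
  ring

lemma A2A2.dual_exists (α : Module.Dual ℝ A2A2) :
    ∃ a0 a1 a2 a3 : ℝ, α = a0 • eps 0 + a1 • eps 1 + a2 • eps 2 + a3 • eps 3 :=
  ⟨_, _, _, _, dual_repr α⟩

lemma A2A2.r_apply (r : Module.Dual ℝ A2A2 →ₗ[ℝ] A2A2)
    (h1 : r (eps 0) = e 1) (h2 : r (eps 1) = -e 0)
    (h3 : r (eps 2) = e 3) (h4 : r (eps 3) = -e 2)
    (γ : Module.Dual ℝ A2A2) (j : Fin 4) :
    r γ j = if j = 0 then -γ (e 1) else if j = 1 then γ (e 0)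
      else if j = 2 then -γ (e 3) else γ (e 2) := by
  conv_lhs => rw [dual_repr γ]
  fin_cases j <;> simp [h1, h2, h3, h4]

lemma A2A2.n_apply (n1 n2 n3 : ℝ) (n : A2A2 →ₗ[ℝ] A2A2)
    (hn0 : n (e 0) = n1 • e 0 - n2 • e 3)
    (hn1 : n (e 1) = n1 • e 1)
    (hn2 : n (e 2) = n2 • e 1 + n3 • e 2)
    (hn3 : n (e 3) = n3 • e 3)
    (x : A2A2) (j : Fin 4) :
    n x j = if j = 0 then n1 * x 0 else if j = 1 then n1 * x 1 + n2 * x 2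
      else if j = 2 then n3 * x 2 else n3 * x 3 - n2 * x 0 := by
  conv_lhs => rw [x_repr x]
  fin_cases j <;> simp [hn0, hn1, hn2, hn3] <;> ring

end Helpers

open A2A2 in
/-- On the Lie algebra `A_2 ⊕ A_2` (bracket `[e1,e2] = e2`, `[e3,e4] = e4`),
the map `r` with `r(ε1) = e2`, `r(ε2) = -e1`, `r(ε3) = e4`, `r(ε4) = -e3` (the 2-vector
`e1∧e2 + e3∧e4`) is a bijective skew-symmetric solution of the CYBE, and for all reals
`n1, n2, n3`, the endomorphism `n` with `n(e1) = n1·e1 - n2·e4`, `n(e2) = n1·e2`,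
`n(e3) = n2·e2 + n3·e3`, `n(e4) = n3·e4` makes `(r, n)` an r-n structure on `g`. -/
theorem a2a2_r_and_rn
    (r : Module.Dual ℝ A2A2 →ₗ[ℝ] A2A2)
    (h1 : r (eps 0) = e 1) (h2 : r (eps 1) = -e 0)
    (h3 : r (eps 2) = e 3) (h4 : r (eps 3) = -e 2) :
    (IsSkew r ∧ Function.Bijective r ∧ IsCYBE r) ∧
    ∀ (n1 n2 n3 : ℝ) (n : A2A2 →ₗ[ℝ] A2A2),
      n (e 0) = n1 • e 0 - n2 • e 3 →
      n (e 1) = n1 • e 1 →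
      n (e 2) = n2 • e 1 + n3 • e 2 →
      n (e 3) = n3 • e 3 →
      IsRN r n := by
  have hr := A2A2.r_apply r h1 h2 h3 h4
  have hskew : IsSkew r := by
    intro α β
    obtain ⟨a0, a1, a2, a3, rfl⟩ := dual_exists α
    obtain ⟨b0, b1, b2, b3, rfl⟩ := dual_exists β
    simp [hr, smul_eq_mul]
    ring
  have hcybe : IsCYBE r := by
    intro α β
    obtain ⟨a0, a1, a2, a3, rfl⟩ := dual_exists α
    obtain ⟨b0, b1, b2, b3, rfl⟩ := dual_exists β
    funext j
    fin_cases j <;>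
      simp [hr, sklyanin, A2A2.coad_apply, smul_eq_mul, br] <;> ring
  have hbij : Function.Bijective r := by
    constructor
    · intro α β hab
      have k0 : α (e 0) = β (e 0) := by have := congrFun hab 1; simpa [hr] using this
      have k1 : α (e 1) = β (e 1) := by have := congrFun hab 0; simpa [hr] using this
      have k2 : α (e 2) = β (e 2) := by have := congrFun hab 3; simpa [hr] using this
      have k3 : α (e 3) = β (e 3) := by have := congrFun hab 2; simpa [hr] using this
      rw [dual_repr α, dual_repr β, k0, k1, k2, k3]
    · intro x
      refine ⟨x 1 • eps 0 + (-(x 0)) • eps 1 + x 3 • eps 2 + (-(x 2)) • eps 3, ?_⟩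
      funext j
      fin_cases j <;> simp [hr]
  refine ⟨⟨hskew, hbij, hcybe⟩, ?_⟩
  intro n1 n2 n3 n hn0 hn1 hn2 hn3
  have hn := A2A2.n_apply n1 n2 n3 n hn0 hn1 hn2 hn3
  refine ⟨hskew, hcybe, ?_, ?_, ?_⟩
  · intro X Y
    funext j
    fin_cases j <;> simp [hn, br] <;> ring
  · intro α
    obtain ⟨a0, a1, a2, a3, rfl⟩ := dual_exists α
    funext j
    fin_cases j <;> simp [hr, hn, smul_eq_mul] <;> ring
  · intro α β
    obtain ⟨a0, a1, a2, a3, rfl⟩ := dual_exists α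
    obtain ⟨b0, b1, b2, b3, rfl⟩ := dual_exists β
    apply LinearMap.ext
    intro x
    simp [hr, hn, A2A2.coad_apply, smul_eq_mul, br]
    ring
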